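/- arXiv:1310.8032 — 3 statements merged into one kernel-verified Lean document; each statement's English description precedes it below -/
import Mathlib

section
/- On ℝ^{2n} with canonical Poisson bracket, let V be homogeneous of degree −2 in q, H̃ = Σ p_i² + V(q), and C̃ = (Σ p_i q_i)² − (Σ q_i²) H̃. Then {H̃, C̃} = 0. -/
noncomputable section

/-- Canonical Poisson bracket on ℝ²ⁿ = {(q,p)}:
`{f,g} = ∑ᵢ (∂f/∂qᵢ ∂g/∂pᵢ − ∂f/∂pᵢ ∂g/∂qᵢ)`. -/
def pbr {n : ℕ} (f g : (Fin n → ℝ) × (Fin n → ℝ) → ℝ)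
    (z : (Fin n → ℝ) × (Fin n → ℝ)) : ℝ :=
  ∑ i : Fin n,
    (fderiv ℝ f z (Pi.single i 1, 0) * fderiv ℝ g z (0, Pi.single i 1)
     - fderiv ℝ f z (0, Pi.single i 1) * fderiv ℝ g z (Pi.single i 1, 0))

theorem hasFDerivAt_sq {E : Type*} [NormedAddCommGroup E] [NormedSpace ℝ E]
    {f : E → ℝ} {f' : E →L[ℝ] ℝ} {x : E} (hf : HasFDerivAt f f' x) :
    HasFDerivAt (fun y => f y ^ 2) ((2 * f x) • f') x := by
  have h := hf.mul hf
  simp only [pow_two]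
  rw [show (2 * f x) • f' = f x • f' + f x • f' by rw [two_mul, add_smul]]
  exact h

/-- For `V` homogeneous of degree −2 (Euler identity `∑ qᵢ ∂ᵢV = −2V`),
the Hamiltonian `H̃ = ∑pᵢ² + V(q)` and the Jacobi integral
`C̃ = (∑pᵢqᵢ)² − (∑qᵢ²)H̃` are in involution: `{H̃, C̃} = 0`. -/
theorem jacobi_integral_commutes {n : ℕ} (V : (Fin n → ℝ) → ℝ)
    (hV : ContDiffOn ℝ (⊤ : ℕ∞) V {q | q ≠ 0})
    (heuler : ∀ q : Fin n → ℝ, q ≠ 0 →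
      (∑ i, q i * fderiv ℝ V q (Pi.single i 1)) = -2 * V q) :
    ∀ z : (Fin n → ℝ) × (Fin n → ℝ), z.1 ≠ 0 →
      pbr (fun w => (∑ i, (w.2 i) ^ 2) + V w.1)
        (fun w => (∑ i, w.2 i * w.1 i) ^ 2
          - (∑ i, (w.1 i) ^ 2) * ((∑ i, (w.2 i) ^ 2) + V w.1)) z = 0 := by
  intro z hz
  -- differentiability of V at z.1
  have hopen : IsOpen {q : Fin n → ℝ | q ≠ 0} := isOpen_ne
  have hVd : DifferentiableAt ℝ V z.1 :=
    (hV.contDiffAt (hopen.mem_nhds hz)).differentiableAt (by simp)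
  set DV : (Fin n → ℝ) →L[ℝ] ℝ := fderiv ℝ V z.1 with hDVdef
  have hDV : HasFDerivAt V DV z.1 := hVd.hasFDerivAt
  -- basic continuous linear maps
  set fst' : ((Fin n → ℝ) × (Fin n → ℝ)) →L[ℝ] (Fin n → ℝ) :=
    ContinuousLinearMap.fst ℝ _ _ with hfst
  set snd' : ((Fin n → ℝ) × (Fin n → ℝ)) →L[ℝ] (Fin n → ℝ) :=
    ContinuousLinearMap.snd ℝ _ _ with hsnd
  set d : Fin n → (((Fin n → ℝ) × (Fin n → ℝ)) →L[ℝ] ℝ) :=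
    fun i => (ContinuousLinearMap.proj i).comp fst' with hd
  set e : Fin n → (((Fin n → ℝ) × (Fin n → ℝ)) →L[ℝ] ℝ) :=
    fun i => (ContinuousLinearMap.proj i).comp snd' with he
  have hdi : ∀ i, HasFDerivAt (fun w : (Fin n → ℝ) × (Fin n → ℝ) => w.1 i) (d i) z :=
    fun i => (d i).hasFDerivAt
  have hei : ∀ i, HasFDerivAt (fun w : (Fin n → ℝ) × (Fin n → ℝ) => w.2 i) (e i) z :=
    fun i => (e i).hasFDerivAt
  -- kinetic energy K = ∑ p_i²
  have hK : HasFDerivAt (fun w : (Fin n → ℝ) × (Fin n → ℝ) => ∑ i, (w.2 i) ^ 2)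
      (∑ i, (2 * z.2 i) • e i) z :=
    HasFDerivAt.fun_sum fun i _ => hasFDerivAt_sq (hei i)
  -- V ∘ fst
  have hVf : HasFDerivAt (fun w : (Fin n → ℝ) × (Fin n → ℝ) => V w.1)
      (DV.comp fst') z := hDV.comp z fst'.hasFDerivAt
  -- Hamiltonian H
  set LH : ((Fin n → ℝ) × (Fin n → ℝ)) →L[ℝ] ℝ :=
    (∑ i, (2 * z.2 i) • e i) + DV.comp fst' with hLH
  have hH : HasFDerivAt (fun w : (Fin n → ℝ) × (Fin n → ℝ) =>
      (∑ i, (w.2 i) ^ 2) + V w.1) LH z := hK.add hVf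
  -- A = ∑ p_i q_i
  set LA : ((Fin n → ℝ) × (Fin n → ℝ)) →L[ℝ] ℝ :=
    ∑ i, (z.2 i • d i + z.1 i • e i) with hLA
  have hA : HasFDerivAt (fun w : (Fin n → ℝ) × (Fin n → ℝ) => ∑ i, w.2 i * w.1 i) LA z :=
    HasFDerivAt.fun_sum fun i _ => (hei i).mul (hdi i)
  -- B = ∑ q_i²
  set LB : ((Fin n → ℝ) × (Fin n → ℝ)) →L[ℝ] ℝ :=
    ∑ i, (2 * z.1 i) • d i with hLB
  have hB : HasFDerivAt (fun w : (Fin n → ℝ) × (Fin n → ℝ) => ∑ i, (w.1 i) ^ 2) LB z :=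
    HasFDerivAt.fun_sum fun i _ => hasFDerivAt_sq (hdi i)
  -- abbreviations for values
  set A : ℝ := ∑ i, z.2 i * z.1 i with hAv
  set B : ℝ := ∑ i, (z.1 i) ^ 2 with hBv
  set K : ℝ := ∑ i, (z.2 i) ^ 2 with hKv
  -- C
  set LC : ((Fin n → ℝ) × (Fin n → ℝ)) →L[ℝ] ℝ :=
    (2 * A) • LA - (B • LH + (K + V z.1) • LB) with hLC
  have hC : HasFDerivAt (fun w : (Fin n → ℝ) × (Fin n → ℝ) =>
      (∑ i, w.2 i * w.1 i) ^ 2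
        - (∑ i, (w.1 i) ^ 2) * ((∑ i, (w.2 i) ^ 2) + V w.1)) LC z :=
    (hasFDerivAt_sq hA).sub (hB.mul hH)
  -- rewrite the Poisson bracket with these derivatives
  unfold pbr
  rw [hH.fderiv, hC.fderiv]
  -- evaluate the linear maps on basis directions
  have evH1 : ∀ i, LH (Pi.single i 1, 0) = DV (Pi.single i 1) := by
    intro i
    simp [hLH, he, hsnd, hfst, ContinuousLinearMap.sum_apply]
  have evH2 : ∀ i, LH (0, Pi.single i 1) = 2 * z.2 i := by
    intro i
    simp [hLH, he, hsnd, hfst, ContinuousLinearMap.sum_apply, Pi.single_apply,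
      mul_ite, Finset.sum_ite_eq']
  have evA1 : ∀ i, LA (Pi.single i 1, 0) = z.2 i := by
    intro i
    simp [hLA, hd, he, hsnd, hfst, ContinuousLinearMap.sum_apply, Pi.single_apply,
      mul_ite, Finset.sum_ite_eq']
  have evA2 : ∀ i, LA (0, Pi.single i 1) = z.1 i := by
    intro i
    simp [hLA, hd, he, hsnd, hfst, ContinuousLinearMap.sum_apply, Pi.single_apply,
      mul_ite, Finset.sum_ite_eq']
  have evB1 : ∀ i, LB (Pi.single i 1, 0) = 2 * z.1 i := by
    intro i
    simp [hLB, hd, hfst, ContinuousLinearMap.sum_apply, Pi.single_apply,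
      mul_ite, Finset.sum_ite_eq']
  have evB2 : ∀ i, LB (0, Pi.single i 1) = 0 := by
    intro i
    simp [hLB, hd, hfst, ContinuousLinearMap.sum_apply]
  have evC1 : ∀ i, LC (Pi.single i 1, 0)
      = 2 * A * z.2 i - (B * DV (Pi.single i 1) + (K + V z.1) * (2 * z.1 i)) := by
    intro i
    simp [hLC, evH1, evA1, evB1, ContinuousLinearMap.sub_apply,
      ContinuousLinearMap.add_apply, ContinuousLinearMap.smul_apply, smul_eq_mul]
  have evC2 : ∀ i, LC (0, Pi.single i 1) = 2 * A * z.1 i - B * (2 * z.2 i) := by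
    intro i
    simp [hLC, evH2, evA2, evB2, ContinuousLinearMap.sub_apply,
      ContinuousLinearMap.add_apply, ContinuousLinearMap.smul_apply, smul_eq_mul]
  -- now a sum identity
  have step : ∀ i ∈ Finset.univ, LH (Pi.single i 1, 0) * LC (0, Pi.single i 1)
      - LH (0, Pi.single i 1) * LC (Pi.single i 1, 0)
      = (2 * A) * (z.1 i * DV (Pi.single i 1)) + (-4 * A) * (z.2 i) ^ 2
        + (4 * (K + V z.1)) * (z.2 i * z.1 i) := by
    intro i _
    rw [evH1, evH2, evC1, evC2]
    ring
  rw [Finset.sum_congr rfl step]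
  rw [Finset.sum_add_distrib, Finset.sum_add_distrib, ← Finset.mul_sum, ← Finset.mul_sum,
    ← Finset.mul_sum]
  rw [heuler z.1 hz, ← hAv, ← hKv]
  ring
end
end

section
/- Under the assumptions of the algebra of integrals {H̃₁,H̃}=0, {H̃₁,C̃}=H̃₃, {H̃₁,H̃₃}=2H̃₁²−6H̃, {H̃,C̃}=0, {H̃,H̃₃}=0, {H̃₃,C̃}=4H̃₁C̃, the function H̃₄ = H̃₃² − 4C̃(H̃₁² − 3H̃) is a central element: {H̃₁,H̃₄} = {H̃,H̃₄} = {C̃,H̃₄} = {H̃₃,H̃₄} = 0. -/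
/-- Given a bracket on a commutative ring which is additive, antisymmetric and
satisfies the Leibniz rule, and four elements with the bracket relations
`{H₁,H̃}=0`, `{H₁,C̃}=H̃₃`, `{H₁,H̃₃}=2H₁²−6H̃`, `{H̃,C̃}=0`, `{H̃,H̃₃}=0`,
`{H̃₃,C̃}=4H₁C̃`, the element `H̃₄ = H̃₃² − 4C̃(H₁² − 3H̃)` is central. -/
theorem central_element_of_algebra {A : Type*} [CommRing A] (b : A → A → A)
    (hadd : ∀ f g h : A, b (f + g) h = b f h + b g h)
    (hskew : ∀ f g : A, b f g = -b g f)
    (hleib : ∀ f g h : A, b (f * g) h = f * b g h + g * b f h)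
    (H₁ H C H₃ : A)
    (h1 : b H₁ H = 0) (h2 : b H₁ C = H₃)
    (h3 : b H₁ H₃ = 2 * H₁ ^ 2 - 6 * H)
    (h4 : b H C = 0) (h5 : b H H₃ = 0)
    (h6 : b H₃ C = 4 * H₁ * C) :
    b H₁ (H₃ ^ 2 - 4 * C * (H₁ ^ 2 - 3 * H)) = 0 ∧
    b H (H₃ ^ 2 - 4 * C * (H₁ ^ 2 - 3 * H)) = 0 ∧
    b C (H₃ ^ 2 - 4 * C * (H₁ ^ 2 - 3 * H)) = 0 ∧
    b H₃ (H₃ ^ 2 - 4 * C * (H₁ ^ 2 - 3 * H)) = 0 := by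
  -- right additivity
  have radd : ∀ f g h : A, b f (g + h) = b f g + b f h := by
    intro f g h
    rw [hskew, hadd, hskew g f, hskew h f]; ring
  -- right Leibniz
  have rleib : ∀ f g h : A, b f (g * h) = g * b f h + h * b f g := by
    intro f g h
    rw [hskew, hleib, hskew g f, hskew h f]; ring
  have rzero : ∀ f : A, b f 0 = 0 := by
    intro f
    have := radd f 0 0
    simpa using this.symm
  have rneg : ∀ f g : A, b f (-g) = -b f g := by
    intro f g
    have h := radd f g (-g)
    rw [add_neg_cancel, rzero] at h
    linear_combination -h
  have rsub : ∀ f g h : A, b f (g - h) = b f g - b f h := by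
    intro f g h
    rw [sub_eq_add_neg, radd, rneg]; ring
  have r1 : ∀ f : A, b f 1 = 0 := by
    intro f
    have := rleib f 1 1
    simpa using this.symm
  have r3 : ∀ f : A, b f 3 = 0 := by
    intro f
    have h3' : (3 : A) = 1 + 1 + 1 := by norm_num
    rw [h3', radd, radd, r1]; ring
  have r4 : ∀ f : A, b f 4 = 0 := by
    intro f
    have h4' : (4 : A) = 1 + 1 + 1 + 1 := by norm_num
    rw [h4', radd, radd, radd, r1]; ring
  -- expand b f (H₃^2 - 4*C*(H₁^2-3H)) for generic f
  have key : ∀ f : A, b f (H₃ ^ 2 - 4 * C * (H₁ ^ 2 - 3 * H)) =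
      2 * H₃ * b f H₃ - 4 * ((H₁ ^ 2 - 3 * H) * b f C
        + C * (2 * H₁ * b f H₁ - 3 * b f H)) := by
    intro f
    rw [rsub, pow_two, rleib, rleib, rleib, rsub, rleib, pow_two, rleib, r3, r4]
    ring
  -- double of diagonal vanishes
  have dbl : ∀ x : A, b x x + b x x = 0 := by
    intro x
    have := hskew x x
    linear_combination this
  have sk : ∀ f g : A, b g f = -b f g := fun f g => hskew g f
  have c1 : b C H₁ = -H₃ := by rw [sk, h2]
  have c2 : b C H = 0 := by rw [sk, h4]; ring
  have c4 : b C H₃ = -(4 * H₁ * C) := by rw [sk, h6]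
  have d1 : b H₃ H₁ = -(2 * H₁ ^ 2 - 6 * H) := by rw [sk, h3]
  have d2 : b H₃ H = 0 := by rw [sk, h5]; ring
  have e1 : b H H₁ = 0 := by rw [sk, h1]; ring
  refine ⟨?_, ?_, ?_, ?_⟩
  · rw [key, h3, h2, h1]
    linear_combination (-4 * C * H₁) * dbl H₁
  · rw [key, h5, h4, e1]
    linear_combination (6 * C) * dbl H
  · rw [key, c4, c1, c2]
    linear_combination (-2 * (H₁ ^ 2 - 3 * H)) * dbl C
  · rw [key, h6, d1, d2]
    linear_combination H₃ * dbl H₃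
end

section
/- The Kowalevski Hamiltonian H₁ = J₁²+J₂²+2J₃²+2a x₁ and the Kowalevski integral H₂ = (J₁²−J₂²−2a x₁)² + (2J₁J₂−2a x₂)² are in involution with respect to the Lie–Poisson bracket on e(3)*: {H₁,H₂} = 0. -/
noncomputable section

/-- The Levi-Civita symbol `ε_{ijk}` on three indices. -/
def eps (i j k : Fin 3) : ℝ :=
  ((j.val : ℝ) - i.val) * ((k.val : ℝ) - j.val) * ((k.val : ℝ) - i.val) / 2

/-- Phase space e(3)* with coordinates `z = (J, x)`. -/
abbrev E3 := (Fin 3 → ℝ) × (Fin 3 → ℝ)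

/-- Partial derivative in the direction of `Jᵢ`. -/
def pJ (i : Fin 3) (f : E3 → ℝ) (z : E3) : ℝ := fderiv ℝ f z (Pi.single i 1, 0)

/-- Partial derivative in the direction of `xᵢ`. -/
def px (i : Fin 3) (f : E3 → ℝ) (z : E3) : ℝ := fderiv ℝ f z (0, Pi.single i 1)

/-- The Lie–Poisson bracket on e(3)*:
`{J_i,J_j}=ε_{ijk}J_k`, `{J_i,x_j}=ε_{ijk}x_k`, `{x_i,x_j}=0`. -/
def e3br (f g : E3 → ℝ) (z : E3) : ℝ :=
  ∑ i, ∑ j, ∑ k, eps i j k *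
    (z.1 k * pJ i f z * pJ j g z
     + z.2 k * (pJ i f z * px j g z + px i f z * pJ j g z))

/-!
Write `ξ = (J₁ + i J₂)² - 2a (x₁ + i x₂)` (indices `0, 1, 2` in the code), so that
`H₂ = |ξ|² = (Re ξ)² + (Im ξ)²`. A direct computation gives `{H₁, Re ξ} = 4 J₃ Im ξ` and
`{H₁, Im ξ} = -4 J₃ Re ξ`, i.e. `{H₁, ξ} = -4i J₃ ξ`: the flow of `H₁` only rotates `ξ`.
Since the bracket is a derivation in its second argument,
`{H₁, H₂} = 2 Re ξ {H₁, Re ξ} + 2 Im ξ {H₁, Im ξ} = 0`.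
-/

open Matrix

def gradJ (f : E3 → ℝ) (z : E3) : Fin 3 → ℝ := fun i => pJ i f z

def gradX (f : E3 → ℝ) (z : E3) : Fin 3 → ℝ := fun i => px i f z

theorem e3br_eq_dotProduct_cross (f g : E3 → ℝ) (z : E3) :
    e3br f g z = z.1 ⬝ᵥ (gradJ f z ⨯₃ gradJ g z)
      + z.2 ⬝ᵥ (gradJ f z ⨯₃ gradX g z + gradX f z ⨯₃ gradJ g z) := by
  simp [e3br, gradJ, gradX, Fin.sum_univ_three, eps, cross_apply, dotProduct]
  ring

section Leibniz

variable {f g h : E3 → ℝ} {z : E3}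

theorem gradJ_fun_add (hg : DifferentiableAt ℝ g z) (hh : DifferentiableAt ℝ h z) :
    gradJ (fun w => g w + h w) z = gradJ g z + gradJ h z := by
  ext i
  simp [gradJ, pJ, fderiv_fun_add hg hh]

theorem gradX_fun_add (hg : DifferentiableAt ℝ g z) (hh : DifferentiableAt ℝ h z) :
    gradX (fun w => g w + h w) z = gradX g z + gradX h z := by
  ext i
  simp [gradX, px, fderiv_fun_add hg hh]

theorem gradJ_fun_pow (n : ℕ) (hg : DifferentiableAt ℝ g z) :
    gradJ (fun w => g w ^ n) z = (n * g z ^ (n - 1)) • gradJ g z := by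
  ext i
  simp [gradJ, pJ, fderiv_fun_pow n hg]

theorem gradX_fun_pow (n : ℕ) (hg : DifferentiableAt ℝ g z) :
    gradX (fun w => g w ^ n) z = (n * g z ^ (n - 1)) • gradX g z := by
  ext i
  simp [gradX, px, fderiv_fun_pow n hg]

theorem e3br_fun_add_right (hg : DifferentiableAt ℝ g z) (hh : DifferentiableAt ℝ h z) :
    e3br f (fun w => g w + h w) z = e3br f g z + e3br f h z := by
  simp only [e3br_eq_dotProduct_cross, gradJ_fun_add hg hh, gradX_fun_add hg hh, map_add,
    dotProduct_add]
  ring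

theorem e3br_fun_pow_right (n : ℕ) (hg : DifferentiableAt ℝ g z) :
    e3br f (fun w => g w ^ n) z = n * g z ^ (n - 1) * e3br f g z := by
  simp only [e3br_eq_dotProduct_cross, gradJ_fun_pow n hg, gradX_fun_pow n hg, map_smul,
    dotProduct_add, dotProduct_smul, smul_eq_mul]
  ring

end Leibniz

section Kowalevski

variable (a : ℝ)

def kowalevskiH : E3 → ℝ := fun w => w.1 0 ^ 2 + w.1 1 ^ 2 + 2 * w.1 2 ^ 2 + 2 * a * w.2 0

def kowalevskiRe : E3 → ℝ := fun w => w.1 0 ^ 2 - w.1 1 ^ 2 - 2 * a * w.2 0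

def kowalevskiIm : E3 → ℝ := fun w => 2 * w.1 0 * w.1 1 - 2 * a * w.2 1

theorem differentiable_kowalevskiRe : Differentiable ℝ (kowalevskiRe a) := by
  unfold kowalevskiRe
  fun_prop

theorem differentiable_kowalevskiIm : Differentiable ℝ (kowalevskiIm a) := by
  unfold kowalevskiIm
  fun_prop

variable (z : E3)

theorem gradJ_kowalevskiH : gradJ (kowalevskiH a) z = ![2 * z.1 0, 2 * z.1 1, 4 * z.1 2] := by
  ext i
  unfold kowalevskiH
  simp (disch := fun_prop) only [gradJ, pJ, fderiv_fun_add, fderiv_fun_pow, fderiv_const_mul,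
    fderiv_apply, fderiv_fst, fderiv_snd]
  fin_cases i <;> simp [mul_comm]
  ring

theorem gradX_kowalevskiH : gradX (kowalevskiH a) z = ![2 * a, 0, 0] := by
  ext i
  unfold kowalevskiH
  simp (disch := fun_prop) only [gradX, px, fderiv_fun_add, fderiv_fun_pow, fderiv_const_mul,
    fderiv_apply, fderiv_fst, fderiv_snd]
  fin_cases i <;> simp

theorem gradJ_kowalevskiRe : gradJ (kowalevskiRe a) z = ![2 * z.1 0, -(2 * z.1 1), 0] := by
  ext i
  unfold kowalevskiRe
  simp (disch := fun_prop) only [gradJ, pJ, fderiv_fun_sub, fderiv_fun_pow, fderiv_const_mul,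
    fderiv_apply, fderiv_fst, fderiv_snd]
  fin_cases i <;> simp [mul_comm]

theorem gradX_kowalevskiRe : gradX (kowalevskiRe a) z = ![-(2 * a), 0, 0] := by
  ext i
  unfold kowalevskiRe
  simp (disch := fun_prop) only [gradX, px, fderiv_fun_sub, fderiv_fun_pow, fderiv_const_mul,
    fderiv_apply, fderiv_fst, fderiv_snd]
  fin_cases i <;> simp

theorem gradJ_kowalevskiIm : gradJ (kowalevskiIm a) z = ![2 * z.1 1, 2 * z.1 0, 0] := by
  ext i
  unfold kowalevskiIm
  simp (disch := fun_prop) only [gradJ, pJ, fderiv_fun_sub, fderiv_const_mul, fderiv_fun_mul,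
    fderiv_apply, fderiv_fst, fderiv_snd]
  fin_cases i <;> simp [mul_comm]

theorem gradX_kowalevskiIm : gradX (kowalevskiIm a) z = ![0, -(2 * a), 0] := by
  ext i
  unfold kowalevskiIm
  simp (disch := fun_prop) only [gradX, px, fderiv_fun_sub, fderiv_const_mul, fderiv_fun_mul,
    fderiv_apply, fderiv_fst, fderiv_snd]
  fin_cases i <;> simp

theorem e3br_kowalevskiH_kowalevskiRe :
    e3br (kowalevskiH a) (kowalevskiRe a) z = 4 * z.1 2 * kowalevskiIm a z := by
  rw [e3br_eq_dotProduct_cross, gradJ_kowalevskiH, gradX_kowalevskiH, gradJ_kowalevskiRe,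
    gradX_kowalevskiRe]
  simp [cross_apply, dotProduct, Fin.sum_univ_three, kowalevskiIm]
  ring

theorem e3br_kowalevskiH_kowalevskiIm :
    e3br (kowalevskiH a) (kowalevskiIm a) z = -(4 * z.1 2 * kowalevskiRe a z) := by
  rw [e3br_eq_dotProduct_cross, gradJ_kowalevskiH, gradX_kowalevskiH, gradJ_kowalevskiIm,
    gradX_kowalevskiIm]
  simp [cross_apply, dotProduct, Fin.sum_univ_three, kowalevskiRe]
  ring

end Kowalevski

/-- The Kowalevski Hamiltonian `H₁ = J₁²+J₂²+2J₃²+2a x₁` and the Kowalevski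
integral `H₂ = (J₁²−J₂²−2a x₁)² + (2J₁J₂−2a x₂)²` are in involution with respect
to the Lie–Poisson bracket on e(3)*. -/
theorem kowalevski_involution (a : ℝ) :
    ∀ z : E3,
      e3br
        (fun w => (w.1 0) ^ 2 + (w.1 1) ^ 2 + 2 * (w.1 2) ^ 2 + 2 * a * w.2 0)
        (fun w => ((w.1 0) ^ 2 - (w.1 1) ^ 2 - 2 * a * w.2 0) ^ 2
                  + (2 * w.1 0 * w.1 1 - 2 * a * w.2 1) ^ 2) z = 0 := by
  intro z
  change e3br (kowalevskiH a) (fun w => kowalevskiRe a w ^ 2 + kowalevskiIm a w ^ 2) z = 0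
  have hRe := differentiable_kowalevskiRe a z
  have hIm := differentiable_kowalevskiIm a z
  rw [e3br_fun_add_right (by fun_prop) (by fun_prop), e3br_fun_pow_right 2 hRe,
    e3br_fun_pow_right 2 hIm, e3br_kowalevskiH_kowalevskiRe, e3br_kowalevskiH_kowalevskiIm]
  ring
end
end
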